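/- Completeness of DmbC with respect to swap Kripke models: for every set of formulas Γ ∪ {φ} ⊆ For(Σ), if Γ ⊨_DmbC φ then Γ ⊢_DmbC φ. -/

import Mathlib

/-- Formulas over the signature Σ = {∧, ∨, →, ¬, ∘, O}, with countably many
propositional variables. -/
inductive Form : Type
  | var : ℕ → Form
  | and : Form → Form → Form
  | or : Form → Form → Form
  | imp : Form → Form → Form
  | neg : Form → Form
  | circ : Form → Form
  | obl : Form → Form

namespace Form
/-- ⊥_α := (α ∧ ¬α) ∧ ∘α -/
def bot (α : Form) : Form := (α.and α.neg).and α.circ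
end Form

/-- Theorems of the Hilbert calculus DmbC: CPL⁺ axioms, (EM), (bc), (O-K), (O-E),
with rules Modus Ponens and O-necessitation. -/
inductive ThmDmbC : Form → Prop
  | A1 (α β : Form) : ThmDmbC (α.imp (β.imp α))
  | A2 (α β γ : Form) : ThmDmbC ((α.imp (β.imp γ)).imp ((α.imp β).imp (α.imp γ)))
  | A3 (α β : Form) : ThmDmbC (α.imp (β.imp (α.and β)))
  | A4 (α β : Form) : ThmDmbC ((α.and β).imp α)
  | A5 (α β : Form) : ThmDmbC ((α.and β).imp β)
  | A6 (α β : Form) : ThmDmbC (α.imp (α.or β))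
  | A7 (α β : Form) : ThmDmbC (β.imp (α.or β))
  | A8 (α β γ : Form) : ThmDmbC ((α.imp γ).imp ((β.imp γ).imp ((α.or β).imp γ)))
  | A9 (α β : Form) : ThmDmbC (((α.imp β).imp α).imp α)
  | EM (α : Form) : ThmDmbC (α.or α.neg)
  | bc (α β : Form) : ThmDmbC (α.circ.imp (α.imp (α.neg.imp β)))
  | OK (α β : Form) : ThmDmbC ((α.imp β).obl.imp (α.obl.imp β.obl))
  | OE (α : Form) : ThmDmbC (α.bot.obl.imp α.bot)
  | mp {α β : Form} : ThmDmbC (α.imp β) → ThmDmbC α → ThmDmbC β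
  | nec {α : Form} : ThmDmbC α → ThmDmbC α.obl

/-- conj γ [γ₂,…,γ_k] = γ ∧ γ₂ ∧ … ∧ γ_k -/
def conj (γ : Form) : List Form → Form
  | [] => γ
  | δ :: l => γ.and (conj δ l)

/-- Γ ⊢_DmbC φ iff ⊢ φ or ⊢ (γ₁ ∧ … ∧ γ_k) → φ for some γ₁,…,γ_k ∈ Γ, k ≥ 1. -/
def DerivDmbC (Γ : Set Form) (φ : Form) : Prop :=
  ThmDmbC φ ∨ ∃ (γ : Form) (l : List Form),
    (∀ δ ∈ γ :: l, δ ∈ Γ) ∧ ThmDmbC ((conj γ l).imp φ)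

/-- The three snapshots T = (1,0), t = (1,1), F = (0,1). -/
inductive SV : Type
  | T | t | F
deriving DecidableEq

/-- First coordinate of a snapshot. -/
def SV.p1 : SV → Bool
  | .T => true | .t => true | .F => false

/-- Second coordinate of a snapshot. -/
def SV.p2 : SV → Bool
  | .T => false | .t => true | .F => true

/-- Designated values: D = {T, t}, i.e. first coordinate is 1. -/
def SV.desig (a : SV) : Prop := a.p1 = true

/-- Swap Kripke model conditions for DmbC on a serial frame (W,R) with
valuations v_w : Form → SV. -/
structure IsModelDmbC {W : Type} (R : W → W → Prop) (v : W → Form → SV) : Prop where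
  serial : ∀ w, ∃ w', R w w'
  and_ : ∀ w α β, (v w (α.and β)).p1 = ((v w α).p1 && (v w β).p1)
  or_ : ∀ w α β, (v w (α.or β)).p1 = ((v w α).p1 || (v w β).p1)
  imp_ : ∀ w α β, (v w (α.imp β)).p1 = (!(v w α).p1 || (v w β).p1)
  neg_ : ∀ w α, (v w α.neg).p1 = (v w α).p2
  circ_ : ∀ w α, (v w α.circ).p1 ≤ !((v w α).p1 && (v w α).p2)
  obl_ : ∀ w α, ((v w α.obl).p1 = true ↔ ∀ w', R w w' → (v w' α).p1 = true)

/-- Γ ⊨_DmbC φ : semantic consequence over all swap Kripke models for DmbC. -/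
def SemDmbC (Γ : Set Form) (φ : Form) : Prop :=
  ∀ (W : Type) (R : W → W → Prop) (v : W → Form → SV), Nonempty W →
    IsModelDmbC R v → ∀ w : W, (∀ γ ∈ Γ, (v w γ).desig) → (v w φ).desig

/-!
Canonical model construction. Worlds are the sets of formulas that are maximal among those not
deriving some fixed formula ψ; such a set Δ behaves classically on the positive connectives,
contains α or ¬α for every α, and never contains ∘α, α and ¬α together, so giving α the value
(α ∈ Δ, ¬α ∈ Δ) is a swap valuation. A world Δ sees Δ' when Δ' contains every α with Oα ∈ Δ.
Necessitation and (O-K) make Oα derivable from Δ whenever α is derivable from {β | Oβ ∈ Δ}, which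
gives the truth lemma for O, and (O-E) keeps {β | Oβ ∈ Δ} from deriving ⊥_α, which makes the
relation serial. A set Γ not deriving φ extends to such a world refuting φ.
-/

inductive Proves (Γ : Set Form) : Form → Prop
  | thm {φ : Form} : ThmDmbC φ → Proves Γ φ
  | hyp {φ : Form} : φ ∈ Γ → Proves Γ φ
  | mp {α β : Form} : Proves Γ (α.imp β) → Proves Γ α → Proves Γ β

theorem ThmDmbC.imp_self (α : Form) : ThmDmbC (α.imp α) :=
  .mp (.mp (.A2 α (α.imp α) α) (.A1 α (α.imp α))) (.A1 α α)

namespace Proves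

variable {Γ Δ : Set Form} {α β φ ψ : Form}

theorem trans (h : Proves Γ φ) (hΓ : ∀ δ ∈ Γ, Proves Δ δ) : Proves Δ φ := by
  induction h with
  | thm h => exact thm h
  | hyp h => exact hΓ _ h
  | mp _ _ ih₁ ih₂ => exact mp ih₁ ih₂

theorem mono (hΓΔ : Γ ⊆ Δ) (h : Proves Γ φ) : Proves Δ φ :=
  h.trans fun _ hδ => hyp (hΓΔ hδ)

theorem imp_of_insert (h : Proves (insert α Γ) φ) : Proves Γ (α.imp φ) := by
  induction h with
  | thm h => exact mp (thm (.A1 _ α)) (thm h)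
  | hyp h =>
    rcases h with rfl | h
    · exact thm (.imp_self _)
    · exact mp (thm (.A1 _ α)) (hyp h)
  | mp _ _ ih₁ ih₂ => exact mp (mp (thm (.A2 _ _ _)) ih₁) ih₂

theorem thmDmbC_of_empty (h : Proves ∅ φ) : ThmDmbC φ := by
  induction h with
  | thm h => exact h
  | hyp h => exact absurd h (Set.notMem_empty _)
  | mp _ _ ih₁ ih₂ => exact .mp ih₁ ih₂

theorem exists_list (h : Proves Γ φ) :
    ∃ L : List Form, (∀ δ ∈ L, δ ∈ Γ) ∧ Proves {δ | δ ∈ L} φ := by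
  induction h with
  | thm h => exact ⟨[], by simp, thm h⟩
  | @hyp φ h => exact ⟨[φ], by simpa using h, hyp (by simp)⟩
  | mp _ _ ih₁ ih₂ =>
    obtain ⟨L₁, hL₁, h₁⟩ := ih₁
    obtain ⟨L₂, hL₂, h₂⟩ := ih₂
    refine ⟨L₁ ++ L₂, by simpa [or_imp, forall_and] using And.intro hL₁ hL₂, ?_⟩
    exact mp (h₁.mono fun _ hδ => List.mem_append_left _ hδ)
      (h₂.mono fun _ hδ => List.mem_append_right _ hδ)

theorem exists_mem_of_sUnion {c : Set (Set Form)} (hc : DirectedOn (· ⊆ ·) c)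
    (hne : c.Nonempty) (h : Proves (⋃₀ c) φ) : ∃ s ∈ c, Proves s φ := by
  induction h with
  | thm h => exact hne.imp fun s hs => ⟨hs, thm h⟩
  | hyp h => exact h.imp fun s hs => ⟨hs.1, hyp hs.2⟩
  | mp _ _ ih₁ ih₂ =>
    obtain ⟨s, hs, h₁⟩ := ih₁
    obtain ⟨t, ht, h₂⟩ := ih₂
    obtain ⟨u, hu, hsu, htu⟩ := hc s hs t ht
    exact ⟨u, hu, mp (h₁.mono hsu) (h₂.mono htu)⟩

theorem conj_elim {γ δ : Form} {l : List Form} (hδ : δ ∈ γ :: l) : Proves {conj γ l} δ := by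
  induction l generalizing γ with
  | nil => exact hyp (List.mem_singleton.1 hδ)
  | cons ε l ih =>
    rcases List.mem_cons.1 hδ with rfl | hδ
    · exact mp (thm (.A4 _ _)) (hyp rfl)
    · exact (ih hδ).trans fun _ hx => hx ▸ mp (thm (.A5 γ _)) (hyp rfl)

theorem derivDmbC (h : Proves Γ φ) : DerivDmbC Γ φ := by
  obtain ⟨L, hLΓ, hL⟩ := h.exists_list
  cases L with
  | nil => exact .inl (thmDmbC_of_empty (by simpa using hL))
  | cons γ l =>
    have hconj : Proves (insert (conj γ l) ∅) φ :=
      hL.trans fun _ hδ => (conj_elim hδ).mono (by simp)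
    exact .inr ⟨γ, l, hLΓ, thmDmbC_of_empty (imp_of_insert hconj)⟩

theorem obl (h : Proves Γ φ) : Proves (Form.obl '' Γ) φ.obl := by
  induction h with
  | thm h => exact thm (.nec h)
  | hyp h => exact hyp (Set.mem_image_of_mem _ h)
  | mp _ _ ih₁ ih₂ => exact mp (mp (thm (.OK _ _)) ih₁) ih₂

theorem of_or (h : Proves Γ (α.or β)) (hα : Proves (insert α Γ) ψ)
    (hβ : Proves (insert β Γ) ψ) : Proves Γ ψ :=
  mp (mp (mp (thm (.A8 α β ψ)) (imp_of_insert hα)) (imp_of_insert hβ)) h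

-- Peirce's law (A9) applied to ψ → β plays the role of excluded middle for α.
theorem of_insert_of_insert_imp (hα : Proves (insert α Γ) ψ)
    (himp : Proves (insert (α.imp β) Γ) ψ) : Proves Γ ψ := by
  have hαβ : Proves (insert (ψ.imp β) Γ) (α.imp β) :=
    imp_of_insert (mp (hyp (by simp)) (hα.mono (Set.insert_subset_insert (by simp))))
  have hψ : Proves (insert (ψ.imp β) Γ) ψ :=
    mp ((imp_of_insert himp).mono (Set.subset_insert _ _)) hαβ
  exact mp (thm (.A9 ψ β)) (imp_of_insert hψ)

end Proves

def MaxNonTrivial (ψ : Form) (Δ : Set Form) : Prop :=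
  Maximal (fun Γ => ¬ Proves Γ ψ) Δ

theorem exists_maxNonTrivial_superset {Γ : Set Form} {ψ : Form} (h : ¬ Proves Γ ψ) :
    ∃ Δ, Γ ⊆ Δ ∧ MaxNonTrivial ψ Δ :=
  zorn_subset_nonempty {Δ | ¬ Proves Δ ψ}
    (fun _ hcS hchain hne =>
      ⟨_, fun hψ =>
        let ⟨_, hs, hsψ⟩ := Proves.exists_mem_of_sUnion hchain.directedOn hne hψ
        hcS hs hsψ,
      fun _ => Set.subset_sUnion_of_mem⟩) Γ h

namespace MaxNonTrivial

variable {Δ : Set Form} {α β ψ : Form}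

theorem not_proves (h : MaxNonTrivial ψ Δ) : ¬ Proves Δ ψ := h.prop

theorem proves_insert (h : MaxNonTrivial ψ Δ) (hα : α ∉ Δ) : Proves (insert α Δ) ψ := by
  by_contra hins
  exact hα (h.eq_of_subset hins (Set.subset_insert _ _) ▸ Set.mem_insert _ _)

theorem mem_of_proves (h : MaxNonTrivial ψ Δ) (hα : Proves Δ α) : α ∈ Δ := by
  by_contra hα'
  exact h.not_proves (.mp (Proves.imp_of_insert (h.proves_insert hα')) hα)

theorem and_mem_iff (h : MaxNonTrivial ψ Δ) : α.and β ∈ Δ ↔ α ∈ Δ ∧ β ∈ Δ :=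
  ⟨fun hαβ => ⟨h.mem_of_proves (.mp (.thm (.A4 α β)) (.hyp hαβ)),
      h.mem_of_proves (.mp (.thm (.A5 α β)) (.hyp hαβ))⟩,
    fun ⟨hα, hβ⟩ => h.mem_of_proves (.mp (.mp (.thm (.A3 α β)) (.hyp hα)) (.hyp hβ))⟩

theorem or_mem_iff (h : MaxNonTrivial ψ Δ) : α.or β ∈ Δ ↔ α ∈ Δ ∨ β ∈ Δ := by
  refine ⟨fun hαβ => ?_, ?_⟩
  · by_contra! hn
    exact h.not_proves ((Proves.hyp hαβ).of_or (h.proves_insert hn.1) (h.proves_insert hn.2))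
  · rintro (hα | hβ)
    · exact h.mem_of_proves (.mp (.thm (.A6 α β)) (.hyp hα))
    · exact h.mem_of_proves (.mp (.thm (.A7 α β)) (.hyp hβ))

theorem imp_mem_iff (h : MaxNonTrivial ψ Δ) : α.imp β ∈ Δ ↔ (α ∈ Δ → β ∈ Δ) := by
  refine ⟨fun hαβ hα => h.mem_of_proves (.mp (.hyp hαβ) (.hyp hα)), fun hαβ => ?_⟩
  by_cases hα : α ∈ Δ
  · exact h.mem_of_proves (.mp (.thm (.A1 β α)) (.hyp (hαβ hα)))
  · by_contra hn
    exact h.not_proves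
      (Proves.of_insert_of_insert_imp (h.proves_insert hα) (h.proves_insert hn))

theorem mem_or_neg_mem (h : MaxNonTrivial ψ Δ) : α ∈ Δ ∨ α.neg ∈ Δ :=
  h.or_mem_iff.1 (h.mem_of_proves (.thm (.EM α)))

theorem neg_not_mem_of_circ_mem (h : MaxNonTrivial ψ Δ) (hc : α.circ ∈ Δ) (hα : α ∈ Δ) :
    α.neg ∉ Δ := fun hn =>
  h.not_proves (.mp (.mp (.mp (.thm (.bc α ψ)) (.hyp hc)) (.hyp hα)) (.hyp hn))

theorem obl_bot_not_mem (h : MaxNonTrivial ψ Δ) : α.bot.obl ∉ Δ := fun hO => by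
  have hbot : α.bot ∈ Δ := h.mem_of_proves (.mp (.thm (.OE α)) (.hyp hO))
  obtain ⟨⟨hα, hn⟩, hc⟩ := (h.and_mem_iff.1 hbot).imp_left h.and_mem_iff.1
  exact h.neg_not_mem_of_circ_mem hc hα hn

end MaxNonTrivial

def CanonicalWorld : Type := {Δ : Set Form // ∃ ψ, MaxNonTrivial ψ Δ}

def canonicalRel (Δ Δ' : CanonicalWorld) : Prop := {α | α.obl ∈ Δ.1} ⊆ Δ'.1

open Classical in
noncomputable def canonicalVal (Δ : CanonicalWorld) (α : Form) : SV :=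
  if α ∈ Δ.1 then (if α.neg ∈ Δ.1 then .t else .T) else .F

section CanonicalModel

variable {Δ : CanonicalWorld} {α : Form}

theorem canonicalVal_p1 : (canonicalVal Δ α).p1 = true ↔ α ∈ Δ.1 := by
  unfold canonicalVal
  split_ifs with hα <;> simp [SV.p1, hα]

theorem canonicalVal_p2 : (canonicalVal Δ α).p2 = true ↔ α.neg ∈ Δ.1 := by
  obtain ⟨ψ, hΔ⟩ := Δ.2
  unfold canonicalVal
  split_ifs with hα hn
  · simp [SV.p2, hn]
  · simp [SV.p2, hn]
  · simp [SV.p2, hΔ.mem_or_neg_mem.resolve_left hα]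

theorem exists_canonicalRel_not_mem (hα : α.obl ∉ Δ.1) :
    ∃ Δ', canonicalRel Δ Δ' ∧ α ∉ Δ'.1 := by
  obtain ⟨ψ, hΔ⟩ := Δ.2
  have hnot : ¬ Proves {β | β.obl ∈ Δ.1} α := fun hp =>
    hα (hΔ.mem_of_proves (hp.obl.mono (by rintro _ ⟨β, hβ, rfl⟩; exact hβ)))
  obtain ⟨Δ', hsub, hΔ'⟩ := exists_maxNonTrivial_superset hnot
  exact ⟨⟨Δ', α, hΔ'⟩, hsub, fun hα' => hΔ'.not_proves (.hyp hα')⟩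

end CanonicalModel

theorem canonical_isModelDmbC : IsModelDmbC canonicalRel canonicalVal where
  serial Δ :=
    let ⟨_, hΔ⟩ := Δ.2
    (exists_canonicalRel_not_mem (hΔ.obl_bot_not_mem (α := .var 0))).imp fun _ => And.left
  and_ Δ α β := Bool.eq_iff_iff.2 <| by
    obtain ⟨ψ, hΔ⟩ := Δ.2
    simp [canonicalVal_p1, hΔ.and_mem_iff]
  or_ Δ α β := Bool.eq_iff_iff.2 <| by
    obtain ⟨ψ, hΔ⟩ := Δ.2
    simp [canonicalVal_p1, hΔ.or_mem_iff]
  imp_ Δ α β := Bool.eq_iff_iff.2 <| by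
    obtain ⟨ψ, hΔ⟩ := Δ.2
    simp only [Bool.or_eq_true, Bool.not_eq_true', Bool.eq_false_iff, ne_eq, canonicalVal_p1,
      hΔ.imp_mem_iff, imp_iff_not_or]
  neg_ Δ α := Bool.eq_iff_iff.2 (canonicalVal_p1.trans canonicalVal_p2.symm)
  circ_ Δ α := by
    obtain ⟨ψ, hΔ⟩ := Δ.2
    cases hc : (canonicalVal Δ α.circ).p1
    · exact Bool.false_le _
    · have hcons : ((canonicalVal Δ α).p1 && (canonicalVal Δ α).p2) ≠ true := by
        simp only [ne_eq, Bool.and_eq_true, canonicalVal_p1, canonicalVal_p2]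
        exact fun ⟨hα, hn⟩ => hΔ.neg_not_mem_of_circ_mem (canonicalVal_p1.1 hc) hα hn
      simp [hcons]
  obl_ Δ α := by
    simp only [canonicalVal_p1]
    refine ⟨fun hO Δ' hR => hR hO, fun hall => ?_⟩
    by_contra hO
    obtain ⟨Δ', hR, hα⟩ := exists_canonicalRel_not_mem hO
    exact hα (hall Δ' hR)

/-- Completeness of DmbC w.r.t. swap Kripke models. -/
theorem DmbC_completeness (Γ : Set Form) (φ : Form) :
    SemDmbC Γ φ → DerivDmbC Γ φ := by
  intro hsem
  by_contra hnd
  obtain ⟨Δ, hΓΔ, hΔ⟩ := exists_maxNonTrivial_superset fun h => hnd h.derivDmbC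
  let w : CanonicalWorld := ⟨Δ, φ, hΔ⟩
  have hφ : (canonicalVal w φ).desig :=
    hsem _ _ _ ⟨w⟩ canonical_isModelDmbC w fun _ hγ => canonicalVal_p1.2 (hΓΔ hγ)
  exact hΔ.not_proves (.hyp (canonicalVal_p1.1 hφ))
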